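/- Adjoint-based Hessian action formula, finite-dimensional form. Let r : ℝ^n × ℝ^d → ℝ^n and q : ℝ^n × ℝ^d → ℝ be twice continuously differentiable, and let u : ℝ^d → ℝ^n be twice differentiable at m̄ ∈ ℝ^d with r(u(m), m) = 0 for all m in a neighborhood of m̄. Write A = D_u r(u(m̄), m̄), B = D_m r(u(m̄), m̄), assume A is invertible, and let v ∈ ℝ^n solve the adjoint equation Aᵀ v = −∇_u q(u(m̄), m̄). Define the Lagrangian ℒ(u, m) = q(u, m) + ⟨v, r(u, m)⟩ with this fixed v. Given a direction m̂ ∈ ℝ^d, let the incremental state û ∈ ℝ^n solve A û = −B m̂, and let the incremental adjoint v̂ ∈ ℝ^n solve Aᵀ v̂ = −(∂²_{uu} ℒ(u(m̄), m̄) û + ∂²_{um} ℒ(u(m̄), m̄) m̂). Then the Hessian of the reduced function Q(m) = q(u(m), m) at m̄ acting on m̂ is ∇²Q(m̄) m̂ = Bᵀ v̂ + ∂²_{mu} ℒ(u(m̄), m̄) û + ∂²_{mm} ℒ(u(m̄), m̄) m̂. -/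

import Mathlib

/-!
On the state manifold `r(u(m), m) = 0` the reduced objective agrees with the Lagrangian,
`Q(m) = ℒ(u(m), m)`, whatever the fixed multiplier `v`. Differentiating twice along the graph
`m ↦ (u(m), m)` gives `D²ℒ` evaluated on the tangent vectors `(u' w, w)` and `(u' m̂, m̂)`, plus
the curvature term `Dℒ (u''(w, m̂), 0)`, which vanishes because the adjoint equation makes `ℒ`
stationary in the state. Differentiating the constraint gives `A u' = -B`, hence `u' m̂ = û`, and
by the incremental adjoint equation the two blocks paired with `u' w` collapse to `⟨B w, v̂⟩`.
-/

open Matrix Filter Function ContinuousLinearMap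

section Calculus

variable {𝕜 : Type*} [NontriviallyNormedField 𝕜]
  {E F G H : Type*} [NormedAddCommGroup E] [NormedSpace 𝕜 E] [NormedAddCommGroup F]
  [NormedSpace 𝕜 F] [NormedAddCommGroup G] [NormedSpace 𝕜 G] [NormedAddCommGroup H]
  [NormedSpace 𝕜 H]

theorem ContinuousLinearMap.apply_prodMk_apply_prodMk (B : E × F →L[𝕜] E × F →L[𝕜] G)
    (a : E) (b : F) (c : E) (e : F) :
    B (a, b) (c, e) = B (a, 0) (c, 0) + B (a, 0) (0, e) + B (0, b) (c, 0) + B (0, b) (0, e) := by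
  have split : ∀ (x : E) (y : F), (x, y) = (x, 0) + (0, y) := by simp
  rw [split a b, split c e]
  simp only [map_add, _root_.add_apply]
  abel

theorem HasFDerivAt.fderiv_fderiv_comp_apply {f : E → G} {g : H → E} {g' : H →L[𝕜] E}
    {k : H → E} {x : H} (hg : HasFDerivAt g g' x) (hf : DifferentiableAt 𝕜 (fderiv 𝕜 f) (g x))
    (hk : DifferentiableAt 𝕜 k x) (w : H) :
    fderiv 𝕜 (fun y => fderiv 𝕜 f (g y) (k y)) x w =
      fderiv 𝕜 (fderiv 𝕜 f) (g x) (g' w) (k x) + fderiv 𝕜 f (g x) (fderiv 𝕜 k x w) := by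
  have hderiv : HasFDerivAt (fun y => fderiv 𝕜 f (g y) (k y)) _ x :=
    (hf.hasFDerivAt.comp x hg).clm_apply hk.hasFDerivAt
  rw [hderiv.fderiv]
  simp [add_comm]

variable {f : E → F → G}

theorem HasFDerivAt.partial_fst {f' : E × F →L[𝕜] G} {x : E} {c : F}
    (hf : HasFDerivAt (uncurry f) f' (x, c)) :
    HasFDerivAt (fun y => f y c) (f'.comp (inl 𝕜 E F)) x :=
  hf.comp (f := (·, c)) x (hasFDerivAt_prodMk_left x c)

theorem HasFDerivAt.partial_snd {f' : E × F →L[𝕜] G} {x : E} {c : F}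
    (hf : HasFDerivAt (uncurry f) f' (x, c)) :
    HasFDerivAt (fun y => f x y) (f'.comp (inr 𝕜 E F)) c :=
  hf.comp (f := (x, ·)) c (hasFDerivAt_prodMk_right x c)

theorem fderiv_partial_fst_apply {x : E} {c : F} (hf : DifferentiableAt 𝕜 (uncurry f) (x, c))
    (z : E) : fderiv 𝕜 (fun y => f y c) x z = fderiv 𝕜 (uncurry f) (x, c) (z, 0) := by
  rw [hf.hasFDerivAt.partial_fst.fderiv]
  rfl

theorem fderiv_partial_snd_apply {x : E} {c : F} (hf : DifferentiableAt 𝕜 (uncurry f) (x, c))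
    (z : F) : fderiv 𝕜 (fun y => f x y) c z = fderiv 𝕜 (uncurry f) (x, c) (0, z) := by
  rw [hf.hasFDerivAt.partial_snd.fderiv]
  rfl

section SecondPartials

variable {x : E} {c : F} (hf : Differentiable 𝕜 (uncurry f))
  (hf' : DifferentiableAt 𝕜 (fderiv 𝕜 (uncurry f)) (x, c))
include hf hf'

theorem fderiv_partial_fst_partial_fst (a b : E) :
    fderiv 𝕜 (fun x' => fderiv 𝕜 (fun y => f y c) x' a) x b =
      fderiv 𝕜 (fderiv 𝕜 (uncurry f)) (x, c) (b, 0) (a, 0) := by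
  simp_rw [fderiv_partial_fst_apply (hf _)]
  rw [(hasFDerivAt_prodMk_left (𝕜 := 𝕜) x c).fderiv_fderiv_comp_apply hf'
    (differentiableAt_const (a, (0 : F)))]
  simp

theorem fderiv_partial_snd_partial_fst (a : E) (b : F) :
    fderiv 𝕜 (fun m => fderiv 𝕜 (fun y => f y m) x a) c b =
      fderiv 𝕜 (fderiv 𝕜 (uncurry f)) (x, c) (0, b) (a, 0) := by
  simp_rw [fderiv_partial_fst_apply (hf _)]
  rw [(hasFDerivAt_prodMk_right (𝕜 := 𝕜) x c).fderiv_fderiv_comp_apply hf'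
    (differentiableAt_const (a, (0 : F)))]
  simp

theorem fderiv_partial_fst_partial_snd (a : F) (b : E) :
    fderiv 𝕜 (fun x' => fderiv 𝕜 (fun m => f x' m) c a) x b =
      fderiv 𝕜 (fderiv 𝕜 (uncurry f)) (x, c) (b, 0) (0, a) := by
  simp_rw [fderiv_partial_snd_apply (hf _)]
  rw [(hasFDerivAt_prodMk_left (𝕜 := 𝕜) x c).fderiv_fderiv_comp_apply hf'
    (differentiableAt_const ((0 : E), a))]
  simp

theorem fderiv_partial_snd_partial_snd (a b : F) :
    fderiv 𝕜 (fun m => fderiv 𝕜 (fun m' => f x m') m a) c b =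
      fderiv 𝕜 (fderiv 𝕜 (uncurry f)) (x, c) (0, b) (0, a) := by
  simp_rw [fderiv_partial_snd_apply (hf _)]
  rw [(hasFDerivAt_prodMk_right (𝕜 := 𝕜) x c).fderiv_fderiv_comp_apply hf'
    (differentiableAt_const ((0 : E), a))]
  simp

end SecondPartials

variable {u : F → E} {x : F}

theorem HasFDerivAt.graph {u' : F →L[𝕜] E} (hu : HasFDerivAt u u' x) :
    HasFDerivAt (fun m => (u m, m)) (u'.prod (.id 𝕜 F)) x :=
  hu.prodMk (hasFDerivAt_id x)

theorem fderiv_comp_graph_apply (hf : DifferentiableAt 𝕜 (uncurry f) (u x, x))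
    (hu : DifferentiableAt 𝕜 u x) (h : F) :
    fderiv 𝕜 (fun m => f (u m) m) x h = fderiv 𝕜 (uncurry f) (u x, x) (fderiv 𝕜 u x h, h) := by
  have hderiv : HasFDerivAt (fun m => f (u m) m) _ x :=
    hf.hasFDerivAt.comp (f := fun m => (u m, m)) x hu.hasFDerivAt.graph
  rw [hderiv.fderiv]
  rfl

theorem fderiv_partial_fst_add_fderiv_partial_snd_eq_zero
    (hf : DifferentiableAt 𝕜 (uncurry f) (u x, x)) (hu : DifferentiableAt 𝕜 u x)
    (hzero : ∀ᶠ m in nhds x, f (u m) m = 0) (h : F) :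
    fderiv 𝕜 (fun y => f y x) (u x) (fderiv 𝕜 u x h) + fderiv 𝕜 (fun m => f (u x) m) x h = 0 := by
  rw [fderiv_partial_fst_apply hf, fderiv_partial_snd_apply hf, ← map_add, Prod.mk_add_mk,
    add_zero, zero_add, ← fderiv_comp_graph_apply hf hu,
    EventuallyEq.fderiv_eq (f := fun _ => 0) hzero]
  simp

theorem fderiv_fderiv_comp_graph_apply (hf : Differentiable 𝕜 (uncurry f))
    (hf' : DifferentiableAt 𝕜 (fderiv 𝕜 (uncurry f)) (u x, x))
    (hu : ∀ᶠ m in nhds x, DifferentiableAt 𝕜 u m) (hu' : DifferentiableAt 𝕜 (fderiv 𝕜 u) x)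
    (h w : F) :
    fderiv 𝕜 (fun m => fderiv 𝕜 (fun m' => f (u m') m') m h) x w =
      fderiv 𝕜 (fderiv 𝕜 (uncurry f)) (u x, x) (fderiv 𝕜 u x w, w) (fderiv 𝕜 u x h, h) +
        fderiv 𝕜 (uncurry f) (u x, x) (fderiv 𝕜 (fderiv 𝕜 u) x w h, 0) := by
  have hfirst : (fun m => fderiv 𝕜 (fun m' => f (u m') m') m h) =ᶠ[nhds x]
      fun m => fderiv 𝕜 (uncurry f) (u m, m) (fderiv 𝕜 u m h, h) :=
    hu.mono fun m hm => fderiv_comp_graph_apply (hf _) hm h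
  have hk : DifferentiableAt 𝕜 (fun m => (fderiv 𝕜 u m h, h)) x :=
    (hu'.clm_apply (differentiableAt_const h)).prodMk (differentiableAt_const h)
  rw [hfirst.fderiv_eq, hu.self_of_nhds.hasFDerivAt.graph.fderiv_fderiv_comp_apply
    hf' hk, DifferentiableAt.fderiv_prodMk (hu'.clm_apply (differentiableAt_const h))
    (differentiableAt_const h), fderiv_clm_apply hu' (differentiableAt_const h)]
  simp

theorem fderiv_fderiv_comp_graph_apply_of_fderiv_partial_fst_eq_zero
    (hf : Differentiable 𝕜 (uncurry f))
    (hf' : DifferentiableAt 𝕜 (fderiv 𝕜 (uncurry f)) (u x, x))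
    (hsymm : IsSymmSndFDerivAt 𝕜 (uncurry f) (u x, x))
    (hstat : fderiv 𝕜 (fun y => f y x) (u x) = 0)
    (hu : ∀ᶠ m in nhds x, DifferentiableAt 𝕜 u m) (hu' : DifferentiableAt 𝕜 (fderiv 𝕜 u) x)
    (h w : F) :
    fderiv 𝕜 (fun m => fderiv 𝕜 (fun m' => f (u m') m') m h) x w =
      fderiv 𝕜 (fun x' => fderiv 𝕜 (fun y => f y x) x' (fderiv 𝕜 u x h)) (u x) (fderiv 𝕜 u x w) +
        fderiv 𝕜 (fun m => fderiv 𝕜 (fun y => f y m) (u x) (fderiv 𝕜 u x w)) x h +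
        fderiv 𝕜 (fun x' => fderiv 𝕜 (fun m => f x' m) x w) (u x) (fderiv 𝕜 u x h) +
        fderiv 𝕜 (fun m => fderiv 𝕜 (fun m' => f (u x) m') m h) x w := by
  rw [fderiv_fderiv_comp_graph_apply hf hf' hu hu', ← fderiv_partial_fst_apply (hf _), hstat,
    _root_.zero_apply, add_zero, apply_prodMk_apply_prodMk, hsymm (_, 0) (0, h),
    hsymm (0, w) (_, 0),
    fderiv_partial_fst_partial_fst hf hf', fderiv_partial_snd_partial_fst hf hf',
    fderiv_partial_fst_partial_snd hf hf', fderiv_partial_snd_partial_snd hf hf']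

end Calculus

section Adjoint

variable {ι κ : Type*} [Fintype ι] [Fintype κ]

theorem HasFDerivAt.const_dotProduct {𝕜 : Type*} [NontriviallyNormedField 𝕜] [CompleteSpace 𝕜]
    {E : Type*} [NormedAddCommGroup E] [NormedSpace 𝕜 E]
    {g : E → ι → 𝕜} {g' : E →L[𝕜] ι → 𝕜} {x : E} (hg : HasFDerivAt g g' x) (v : ι → 𝕜) :
    HasFDerivAt (fun y => v ⬝ᵥ g y) ((dotProductBilin 𝕜 𝕜 v).toContinuousLinearMap.comp g') x :=
  (dotProductBilin 𝕜 𝕜 v).toContinuousLinearMap.hasFDerivAt.comp x hg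

theorem ContDiff.const_dotProduct {𝕜 : Type*} [NontriviallyNormedField 𝕜] [CompleteSpace 𝕜]
    {E : Type*} [NormedAddCommGroup E] [NormedSpace 𝕜 E]
    {g : E → ι → 𝕜} {n : WithTop ℕ∞} (hg : ContDiff 𝕜 n g) (v : ι → 𝕜) :
    ContDiff 𝕜 n (fun y => v ⬝ᵥ g y) :=
  (dotProductBilin 𝕜 𝕜 v).toContinuousLinearMap.contDiff.comp hg

theorem fderiv_add_dotProduct_eq_zero_of_transpose_mulVec_eq_neg {𝕜 : Type*}
    [NontriviallyNormedField 𝕜] [CompleteSpace 𝕜] {q : (κ → 𝕜) → 𝕜}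
    {r : (κ → 𝕜) → ι → 𝕜} {x : κ → 𝕜} (hq : DifferentiableAt 𝕜 q x)
    (hr : DifferentiableAt 𝕜 r x) {A : Matrix ι κ 𝕜} (hA : ∀ w, A *ᵥ w = fderiv 𝕜 r x w)
    {g : κ → 𝕜} (hg : ∀ w, g ⬝ᵥ w = fderiv 𝕜 q x w) {v : ι → 𝕜} (hv : Aᵀ *ᵥ v = -g) :
    fderiv 𝕜 (fun y => q y + v ⬝ᵥ r y) x = 0 := by
  have hderiv : HasFDerivAt (fun y => q y + v ⬝ᵥ r y) _ x :=
    hq.hasFDerivAt.add (hr.hasFDerivAt.const_dotProduct v)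
  ext1 z
  rw [hderiv.fderiv]
  simp only [_root_.add_apply, coe_comp, Function.comp_apply,
    LinearMap.coe_toContinuousLinearMap',
    dotProductBilin_apply_apply, ← hA, ← hg, _root_.zero_apply]
  rw [← dotProduct_transpose_mulVec, hv, dotProduct_neg, dotProduct_comm, add_neg_cancel]

theorem dotProduct_eq_transpose_mulVec_dotProduct {R : Type*} [CommRing R] {A : Matrix ι ι R}
    {B : Matrix ι κ R} {z y vhat : ι → R} {w : κ → R} (hz : A *ᵥ z = -(B *ᵥ w))
    (hvhat : Aᵀ *ᵥ vhat = -y) :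
    z ⬝ᵥ y = (Bᵀ *ᵥ vhat) ⬝ᵥ w := by
  rw [← neg_neg y, ← hvhat, dotProduct_neg, dotProduct_transpose_mulVec, hz, dotProduct_neg,
    neg_neg, dotProduct_comm (Bᵀ *ᵥ vhat), dotProduct_transpose_mulVec]

end Adjoint

/-- Adjoint-based Hessian action formula (finite-dimensional form). Let
`r : ℝⁿ × ℝ^d → ℝⁿ` and `q : ℝⁿ × ℝ^d → ℝ` be `C²`, and let `u : ℝ^d → ℝⁿ` be twice
differentiable at `m̄` with `r(u(m), m) = 0` near `m̄`. With `A = D_u r(u(m̄), m̄)`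
invertible, `B = D_m r(u(m̄), m̄)`, adjoint `v` solving `Aᵀ v = -∇_u q(u(m̄), m̄)`,
Lagrangian `ℒ(x, m) = q(x, m) + ⟨v, r(x, m)⟩` (with this fixed `v`), incremental
state `û` solving `A û = -B m̂`, and incremental adjoint `v̂` solving
`Aᵀ v̂ = -(∂²ᵤᵤℒ û + ∂²ᵤₘℒ m̂)`, the Hessian of the reduced function
`Q(m) = q(u(m), m)` at `m̄` acting on `m̂` is
`∇²Q(m̄) m̂ = Bᵀ v̂ + ∂²ₘᵤℒ û + ∂²ₘₘℒ m̂`. -/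
theorem adjoint_hessian_action_formula {n d : ℕ}
    (r : (Fin n → ℝ) → (Fin d → ℝ) → (Fin n → ℝ))
    (q : (Fin n → ℝ) → (Fin d → ℝ) → ℝ)
    (hr : ContDiff ℝ 2 (fun p : (Fin n → ℝ) × (Fin d → ℝ) => r p.1 p.2))
    (hq : ContDiff ℝ 2 (fun p : (Fin n → ℝ) × (Fin d → ℝ) => q p.1 p.2))
    (u : (Fin d → ℝ) → (Fin n → ℝ)) (mbar : Fin d → ℝ)
    (hu1 : ∀ᶠ m in nhds mbar, DifferentiableAt ℝ u m)
    (hu2 : DifferentiableAt ℝ (fderiv ℝ u) mbar)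
    (hstate : ∀ᶠ m in nhds mbar, r (u m) m = 0)
    (A : Matrix (Fin n) (Fin n) ℝ)
    (hA : ∀ w : Fin n → ℝ, A *ᵥ w = fderiv ℝ (fun x => r x mbar) (u mbar) w)
    (hAinv : IsUnit A.det)
    (B : Matrix (Fin n) (Fin d) ℝ)
    (hB : ∀ w : Fin d → ℝ, B *ᵥ w = fderiv ℝ (fun m => r (u mbar) m) mbar w)
    (gu : Fin n → ℝ)
    (hgu : ∀ w : Fin n → ℝ, gu ⬝ᵥ w = fderiv ℝ (fun x => q x mbar) (u mbar) w)
    (v : Fin n → ℝ) (hv : Aᵀ *ᵥ v = -gu)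
    (L : (Fin n → ℝ) → (Fin d → ℝ) → ℝ)
    (hL : ∀ x m, L x m = q x m + v ⬝ᵥ r x m)
    (Luu : Matrix (Fin n) (Fin n) ℝ)
    (hLuu : ∀ w what : Fin n → ℝ,
      w ⬝ᵥ (Luu *ᵥ what) =
        fderiv ℝ (fun x => fderiv ℝ (fun y => L y mbar) x what) (u mbar) w)
    (Lum : Matrix (Fin n) (Fin d) ℝ)
    (hLum : ∀ (w : Fin n → ℝ) (mh : Fin d → ℝ),
      w ⬝ᵥ (Lum *ᵥ mh) =
        fderiv ℝ (fun m => fderiv ℝ (fun x => L x m) (u mbar) w) mbar mh)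
    (Lmu : Matrix (Fin d) (Fin n) ℝ)
    (hLmu : ∀ (w : Fin d → ℝ) (xh : Fin n → ℝ),
      w ⬝ᵥ (Lmu *ᵥ xh) =
        fderiv ℝ (fun x => fderiv ℝ (fun m => L x m) mbar w) (u mbar) xh)
    (Lmm : Matrix (Fin d) (Fin d) ℝ)
    (hLmm : ∀ w mh : Fin d → ℝ,
      w ⬝ᵥ (Lmm *ᵥ mh) =
        fderiv ℝ (fun m => fderiv ℝ (fun m' => L (u mbar) m') m mh) mbar w)
    (mhat : Fin d → ℝ)
    (uhat : Fin n → ℝ) (huhat : A *ᵥ uhat = -(B *ᵥ mhat))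
    (vhat : Fin n → ℝ) (hvhat : Aᵀ *ᵥ vhat = -(Luu *ᵥ uhat + Lum *ᵥ mhat)) :
    ∀ w : Fin d → ℝ,
      fderiv ℝ (fun m => fderiv ℝ (fun m' => q (u m') m') m mhat) mbar w =
        (Bᵀ *ᵥ vhat + Lmu *ᵥ uhat + Lmm *ᵥ mhat) ⬝ᵥ w := by
  intro w
  have hℒ : ContDiff ℝ 2 (uncurry L) := by
    rw [show uncurry L = fun p => q p.1 p.2 + v ⬝ᵥ r p.1 p.2 from funext fun p => hL p.1 p.2]
    exact hq.add (hr.const_dotProduct v)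
  have hℒ₂ : Differentiable ℝ (fderiv ℝ (uncurry L)) :=
    (hℒ.fderiv_right (m := 1) (by norm_num)).differentiable one_ne_zero
  have hrd : Differentiable ℝ (uncurry r) := hr.differentiable two_ne_zero
  have hstat : fderiv ℝ (fun y => L y mbar) (u mbar) = 0 := by
    simp only [hL]
    exact fderiv_add_dotProduct_eq_zero_of_transpose_mulVec_eq_neg
      (hq.differentiable two_ne_zero _).hasFDerivAt.partial_fst.differentiableAt
      (hrd _).hasFDerivAt.partial_fst.differentiableAt hA hgu hv
  have hlin (h : Fin d → ℝ) : A *ᵥ fderiv ℝ u mbar h = -(B *ᵥ h) := by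
    rw [hA, hB, eq_neg_iff_add_eq_zero]
    exact fderiv_partial_fst_add_fderiv_partial_snd_eq_zero (hrd _) hu1.self_of_nhds hstate h
  have huhat' : fderiv ℝ u mbar mhat = uhat :=
    mulVec_injective_iff_isUnit.2 ((isUnit_iff_isUnit_det A).2 hAinv) (by rw [hlin, huhat])
  have hQ : (fun m' => q (u m') m') =ᶠ[nhds mbar] fun m' => L (u m') m' :=
    hstate.mono fun m' h => by simp only [hL, h, dotProduct_zero, add_zero]
  have hQ' : (fun m => fderiv ℝ (fun m' => q (u m') m') m mhat) =ᶠ[nhds mbar]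
      fun m => fderiv ℝ (fun m' => L (u m') m') m mhat :=
    (hQ.fderiv (𝕜 := ℝ)).mono fun m h => congrArg (· mhat) h
  calc fderiv ℝ (fun m => fderiv ℝ (fun m' => q (u m') m') m mhat) mbar w
      = fderiv ℝ u mbar w ⬝ᵥ (Luu *ᵥ uhat) + fderiv ℝ u mbar w ⬝ᵥ (Lum *ᵥ mhat) +
          w ⬝ᵥ (Lmu *ᵥ uhat) + w ⬝ᵥ (Lmm *ᵥ mhat) := by
        rw [hQ'.fderiv_eq, fderiv_fderiv_comp_graph_apply_of_fderiv_partial_fst_eq_zero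
          (hℒ.differentiable two_ne_zero) (hℒ₂ _) (hℒ.contDiffAt.isSymmSndFDerivAt (by simp))
          hstat hu1 hu2, huhat', ← hLuu, ← hLum, ← hLmu, ← hLmm]
    _ = (Bᵀ *ᵥ vhat + Lmu *ᵥ uhat + Lmm *ᵥ mhat) ⬝ᵥ w := by
        rw [← dotProduct_add, dotProduct_eq_transpose_mulVec_dotProduct (hlin w) (by rw [hvhat]),
          add_dotProduct, add_dotProduct, dotProduct_comm w, dotProduct_comm w, add_assoc]
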